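/- arXiv:2410.19715 — 2 statements merged into one kernel-verified Lean document; each statement's English description precedes it below -/
import Mathlib

section
/- Let Θ be a nonempty finite type, f : Θ → ℝ, and ω > 0. The maximum over all probability vectors Λ on Θ of Σ_θ Λ(θ)·f(θ) + (1/ω)·H(Λ) equals (1/ω) · log (Σ_θ exp(ω · f θ)). (The optimal value of the entropy-regularized objective is the scaled log-sum-exp of f.) -/
/-!
Gibbs variational principle: for the softmax distribution `q θ ∝ exp (ω * f θ)` one has
`log q θ = ω * f θ - log Z`, so for every probability vector `Λ` the gap between `log Z` and
`ω * (objective at Λ)` is the Kullback–Leibler divergence `Σ Λ θ * log (Λ θ / q θ) ≥ 0`,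
which vanishes at `Λ = q`.
-/

open Real Finset

lemma mul_log_sub_log_le_sub {p q : ℝ} (hp : 0 ≤ p) (hq : 0 < q) :
    p * (log q - log p) ≤ q - p := by
  rcases hp.eq_or_lt with rfl | hp
  · simpa using hq.le
  have hlog := log_le_sub_one_of_pos (div_pos hq hp)
  rw [log_div hq.ne' hp.ne'] at hlog
  calc p * (log q - log p) ≤ p * (q / p - 1) := mul_le_mul_of_nonneg_left hlog hp.le
    _ = q - p := by field_simp

lemma sum_mul_log_sub_log_le {ι : Type*} (s : Finset ι) {p q : ι → ℝ}
    (hp : ∀ i ∈ s, 0 ≤ p i) (hq : ∀ i ∈ s, 0 < q i) :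
    ∑ i ∈ s, p i * (log (q i) - log (p i)) ≤ ∑ i ∈ s, q i - ∑ i ∈ s, p i := by
  rw [← sum_sub_distrib]
  exact sum_le_sum fun i hi ↦ mul_log_sub_log_le_sub (hp i hi) (hq i hi)

section Softmax

variable {Θ : Type*} [Fintype Θ] [Nonempty Θ] (g : Θ → ℝ)

noncomputable def softmax (θ : Θ) : ℝ := exp (g θ) / ∑ θ', exp (g θ')

lemma sum_exp_pos : 0 < ∑ θ, exp (g θ) :=
  sum_pos (fun _ _ ↦ exp_pos _) univ_nonempty

lemma softmax_pos (θ : Θ) : 0 < softmax g θ :=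
  div_pos (exp_pos _) (sum_exp_pos g)

lemma sum_softmax : ∑ θ, softmax g θ = 1 := by
  simp only [softmax, ← sum_div, div_self (sum_exp_pos g).ne']

lemma log_softmax (θ : Θ) : log (softmax g θ) = g θ - log (∑ θ', exp (g θ')) := by
  rw [softmax, log_div (exp_ne_zero _) (sum_exp_pos g).ne', log_exp]

lemma sum_mul_log_softmax {Λ : Θ → ℝ} (hΛ : ∑ θ, Λ θ = 1) :
    ∑ θ, Λ θ * log (softmax g θ) = ∑ θ, Λ θ * g θ - log (∑ θ, exp (g θ)) := by
  simp only [log_softmax, mul_sub, sum_sub_distrib, ← sum_mul, hΛ, one_mul]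

lemma sum_mul_sub_sum_mul_log_le_log_sum_exp {Λ : Θ → ℝ} (hΛ₀ : ∀ θ, 0 ≤ Λ θ)
    (hΛ : ∑ θ, Λ θ = 1) :
    ∑ θ, Λ θ * g θ - ∑ θ, Λ θ * log (Λ θ) ≤ log (∑ θ, exp (g θ)) := by
  have gibbs := sum_mul_log_sub_log_le univ (fun θ _ ↦ hΛ₀ θ) (fun θ _ ↦ softmax_pos g θ)
  rw [sum_softmax, hΛ, sub_self] at gibbs
  simp only [mul_sub, sum_sub_distrib, sum_mul_log_softmax g hΛ] at gibbs
  linarith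

lemma sum_softmax_mul_sub_sum_softmax_mul_log :
    ∑ θ, softmax g θ * g θ - ∑ θ, softmax g θ * log (softmax g θ) =
      log (∑ θ, exp (g θ)) := by
  rw [sum_mul_log_softmax g (sum_softmax g)]
  ring

end Softmax

/-- The maximum over probability vectors `Λ` on a nonempty finite type `Θ` of the
entropy-regularized objective `Σ Λ θ * f θ + (1/ω) * H(Λ)` equals the scaled
log-sum-exp `(1/ω) * log (Σ exp (ω * f θ))`. -/
theorem entropy_regularized_max_eq_logSumExp
    {Θ : Type*} [Fintype Θ] [Nonempty Θ] (f : Θ → ℝ) (ω : ℝ) (hω : 0 < ω) :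
    IsGreatest
      { v : ℝ | ∃ Λ : Θ → ℝ, (∀ θ, 0 ≤ Λ θ) ∧ (∑ θ, Λ θ) = 1 ∧
          v = (∑ θ, Λ θ * f θ) + (1 / ω) * (-∑ θ, Λ θ * Real.log (Λ θ)) }
      ((1 / ω) * Real.log (∑ θ, Real.exp (ω * f θ))) := by
  have objective_eq (Λ : Θ → ℝ) :
      ∑ θ, Λ θ * f θ + 1 / ω * -∑ θ, Λ θ * log (Λ θ) =
        1 / ω * (∑ θ, Λ θ * (ω * f θ) - ∑ θ, Λ θ * log (Λ θ)) := by
    simp only [mul_left_comm _ ω, ← mul_sum]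
    field_simp
    ring
  refine ⟨⟨softmax (ω * f ·), fun θ ↦ (softmax_pos _ θ).le, sum_softmax _, ?_⟩, ?_⟩
  · rw [objective_eq, sum_softmax_mul_sub_sum_softmax_mul_log]
  · rintro v ⟨Λ, hΛ₀, hΛ, rfl⟩
    rw [objective_eq]
    gcongr
    exact sum_mul_sub_sum_mul_log_le_log_sum_exp (ω * f ·) hΛ₀ hΛ
end

section
/- (CVaR of a finitely supported distribution converges to its maximum as the risk level tends to zero.) Let M be a positive natural number, let z : Fin M → ℝ be the support values, and let p : Fin M → ℝ be probabilities with p i ≥ 0 for all i and Σ_i p i = 1, with at least one p i > 0. For α ∈ (0, 1], define CVaR_α := inf_{c ∈ ℝ} ( c + (1/α) · Σ_i p i · max (z i - c) 0 ). Then CVaR_α tends to max { z i | p i > 0 } as α tends to 0 from the right. -/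
/-!
Let `m` be the largest value `z i₀` carrying positive mass. Once `α ≤ p i₀`, the
Rockafellar–Uryasev objective is bounded below by `m` (the single term `i₀` already gives
`(p i₀ / α) · (m - c)⁺ ≥ m - c`), and it equals `m` at `c = m`, where every term with positive
mass vanishes. So CVaR is eventually constant, equal to `m`, as `α → 0⁺`.
-/

open Set

section RockafellarUryasev

variable {ι : Type*} [Fintype ι] (p z : ι → ℝ)

noncomputable def cvarObjective (α c : ℝ) : ℝ :=
  c + (1 / α) * ∑ i, p i * max (z i - c) 0

noncomputable def cvar (α : ℝ) : ℝ :=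
  ⨅ c : ℝ, cvarObjective p z α c

variable {p z}

theorem le_cvarObjective (hp : ∀ j, 0 ≤ p j) {α : ℝ} (hα : 0 < α) {i : ι} (hαi : α ≤ p i)
    (c : ℝ) : z i ≤ cvarObjective p z α c := by
  have hterm : p i * max (z i - c) 0 ≤ ∑ j, p j * max (z j - c) 0 :=
    Finset.single_le_sum (f := fun j => p j * max (z j - c) 0)
      (fun j _ => mul_nonneg (hp j) (le_max_right _ _)) (Finset.mem_univ i)
  have hratio : 1 ≤ p i / α := (one_le_div hα).2 hαi
  calc z i ≤ c + max (z i - c) 0 := by linarith [le_max_left (z i - c) 0]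
    _ ≤ c + p i / α * max (z i - c) 0 := by
        gcongr; exact le_mul_of_one_le_left (le_max_right _ _) hratio
    _ = c + (1 / α) * (p i * max (z i - c) 0) := by ring
    _ ≤ cvarObjective p z α c := by unfold cvarObjective; gcongr

theorem cvarObjective_self (hp : ∀ j, 0 ≤ p j) {m : ℝ} (hm : ∀ j, 0 < p j → z j ≤ m)
    (α : ℝ) : cvarObjective p z α m = m := by
  have hterm (j : ι) : p j * max (z j - m) 0 = 0 := by
    rcases (hp j).eq_or_lt with hj | hj
    · rw [← hj, zero_mul]
    · rw [max_eq_right (sub_nonpos.2 (hm j hj)), mul_zero]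
  simp only [cvarObjective, hterm, Finset.sum_const_zero, mul_zero, add_zero]

theorem cvar_eq_of_le (hp : ∀ j, 0 ≤ p j) {i : ι} (hz : ∀ j, 0 < p j → z j ≤ z i)
    {α : ℝ} (hα : 0 < α) (hαi : α ≤ p i) : cvar p z α = z i := by
  have hlow : ∀ c, z i ≤ cvarObjective p z α c := le_cvarObjective hp hα hαi
  refine le_antisymm ?_ (le_ciInf hlow)
  exact (ciInf_le ⟨z i, forall_mem_range.2 hlow⟩ (z i)).trans_eq (cvarObjective_self hp hz α)

end RockafellarUryasev

theorem cvar_tendsto_max_of_support_general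
    {M : ℕ} (z p : Fin M → ℝ)
    (hp0 : ∀ i, 0 ≤ p i) (hpos : ∃ i, 0 < p i) :
    Filter.Tendsto
      (fun α : ℝ => ⨅ c : ℝ, (c + (1 / α) * ∑ i, p i * max (z i - c) 0))
      (nhdsWithin 0 (Set.Ioi 0))
      (nhds (sSup { x : ℝ | ∃ i, 0 < p i ∧ z i = x })) := by
  obtain ⟨i₀, hi₀, hmax⟩ := exists_max_image {i | 0 < p i} z (toFinite _) hpos
  have hsup : sSup {x : ℝ | ∃ i, 0 < p i ∧ z i = x} = z i₀ :=
    IsGreatest.csSup_eq ⟨⟨i₀, hi₀, rfl⟩, by rintro _ ⟨j, hj, rfl⟩; exact hmax j hj⟩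
  rw [hsup]
  refine tendsto_const_nhds.congr' ?_
  filter_upwards [Ioc_mem_nhdsGT hi₀] with α hα
  exact (cvar_eq_of_le hp0 hmax hα.1 hα.2).symm

/-- CVaR of a finitely supported distribution converges to its maximum as the risk
level tends to zero: with `CVaR_α = inf_c ( c + (1/α) Σ_i p i * max (z i - c) 0 )`,
`CVaR_α → max { z i | p i > 0 }` as `α → 0⁺`. -/
theorem cvar_tendsto_max_of_support
    {M : ℕ} (hM : 0 < M) (z p : Fin M → ℝ)
    (hp0 : ∀ i, 0 ≤ p i) (hp1 : (∑ i, p i) = 1) (hpos : ∃ i, 0 < p i) :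
    Filter.Tendsto
      (fun α : ℝ => ⨅ c : ℝ, (c + (1 / α) * ∑ i, p i * max (z i - c) 0))
      (nhdsWithin 0 (Set.Ioi 0))
      (nhds (sSup { x : ℝ | ∃ i, 0 < p i ∧ z i = x })) :=
  cvar_tendsto_max_of_support_general z p hp0 hpos
end
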